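/- In the free group F on generators x_s (s a nonempty finite sequence of positive integers), for j > i the automorphism σ̂_j, as well as its inverse, maps any reduced word ending with x_i⁻¹ to a reduced word ending with x_i⁻¹. -/

import Mathlib

open List

section Generic
variable {α : Type*} [DecidableEq α]

/-- cancellable adjacency -/
def RedPair (a b : α × Bool) : Prop := a.1 = b.1 ∧ b.2 = !a.2

instance : DecidablePred (fun ab : (α × Bool) × (α × Bool) => RedPair ab.1 ab.2) := by
  intro ab; unfold RedPair; infer_instance

lemma redPair_comm {a b : α × Bool} : RedPair a b ↔ RedPair b a := by
  constructor <;> rintro ⟨h1, h2⟩ <;> exact ⟨h1.symm, by simp [h2]⟩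

lemma reduce_eq_self_of_chain' {L : List (α × Bool)}
    (h : L.Chain' (fun a b => ¬ RedPair a b)) : FreeGroup.reduce L = L := by
  induction L with
  | nil => rfl
  | cons a L ih =>
    rw [FreeGroup.reduce.cons, ih h.tail]
    cases L with
    | nil => rfl
    | cons b L' =>
      have hab : ¬ RedPair a b := (List.isChain_cons_cons.mp h).1
      dsimp only
      rw [if_neg]
      rintro ⟨h1, h2⟩
      exact hab ⟨h1, by simp [h2]⟩

lemma chain'_reduce (L : List (α × Bool)) :
    (FreeGroup.reduce L).Chain' (fun a b => ¬ RedPair a b) := by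
  induction L with
  | nil => exact List.isChain_nil
  | cons a L ih =>
    rw [FreeGroup.reduce.cons]
    cases h : FreeGroup.reduce L with
    | nil => exact List.isChain_singleton _
    | cons b M =>
      rw [h] at ih
      dsimp only
      split_ifs with hc
      · exact ih.tail
      · exact List.isChain_cons_cons.mpr ⟨fun hr => hc ⟨hr.1, by simp [hr.2]⟩, ih⟩

lemma chain'_toWord (g : FreeGroup α) :
    g.toWord.Chain' (fun a b => ¬ RedPair a b) := by
  rw [← FreeGroup.reduce_toWord]; exact chain'_reduce _

lemma toWord_mk_of_chain' {L : List (α × Bool)}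
    (h : L.Chain' (fun a b => ¬ RedPair a b)) : (FreeGroup.mk L).toWord = L := by
  rw [FreeGroup.toWord_mk, reduce_eq_self_of_chain' h]

lemma mul_letter_no_cancel (g : FreeGroup α) (a : α) (b : Bool)
    (h : ∀ c ∈ g.toWord.getLast?, ¬ RedPair c (a, b)) :
    (g * FreeGroup.mk [(a, b)]).toWord = g.toWord ++ [(a, b)] := by
  conv_lhs => rw [← FreeGroup.mk_toWord (x := g)]
  rw [FreeGroup.mul_mk, toWord_mk_of_chain']
  refine List.isChain_append.mpr ⟨chain'_toWord g, List.isChain_singleton _, ?_⟩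
  intro x hx y hy
  simp only [head?_cons, Option.mem_def, Option.some.injEq] at hy
  subst hy
  exact h x hx

lemma mul_letter_cancel (g : FreeGroup α) (V : List (α × Bool)) (a : α) (b : Bool)
    (h : g.toWord = V ++ [(a, !b)]) :
    (g * FreeGroup.mk [(a, b)]).toWord = V := by
  have hinv : FreeGroup.mk [(a, !b)] = (FreeGroup.mk [(a, b)])⁻¹ := by
    rw [FreeGroup.inv_mk]; simp [FreeGroup.invRev]
  have hg : g = FreeGroup.mk V * FreeGroup.mk [(a, !b)] := by
    rw [FreeGroup.mul_mk, ← h, FreeGroup.mk_toWord]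
  rw [hg, hinv, mul_assoc, inv_mul_cancel, mul_one]
  apply toWord_mk_of_chain'
  have := chain'_toWord g
  rw [h] at this
  exact (List.isChain_append.mp this).1

end Generic




/-- The free group `F_•` on generators `x_s` indexed by nonempty finite sequences
of positive integers; a nonempty sequence is encoded as a (head, tail) pair. -/
abbrev FG := FreeGroup (ℕ+ × List ℕ+)

/-- The automorphism `σ̂_j` of `F_•`:
`x_{j,s} ↦ x_j · x_{j+1,s} · x_j⁻¹`, `x_{j+1,s} ↦ x_{j,s}`, and
`x_{k,s} ↦ x_{k,s}` for `k ∉ {j, j+1}`. -/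
def sigmaHat (j : ℕ+) : FG →* FG :=
  FreeGroup.lift fun p =>
    if p.1 = j then
      FreeGroup.of (j, ([] : List ℕ+)) * FreeGroup.of (j + 1, p.2) *
        (FreeGroup.of (j, ([] : List ℕ+)))⁻¹
    else if p.1 = j + 1 then FreeGroup.of (j, p.2)
    else FreeGroup.of p

/-- the inverse automorphism -/
def tauHat (j : ℕ+) : FG →* FG :=
  FreeGroup.lift fun p =>
    if p.1 = j then FreeGroup.of (j + 1, p.2)
    else if p.1 = j + 1 then
      (FreeGroup.of (j + 1, ([] : List ℕ+)))⁻¹ * FreeGroup.of (j, p.2) *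
        FreeGroup.of (j + 1, ([] : List ℕ+))
    else FreeGroup.of p

lemma pnat_ne_succ (j : ℕ+) : j ≠ j + 1 := by
  intro h
  have := congrArg (fun x : ℕ+ => (x : ℕ)) h
  simp [PNat.add_coe] at this

lemma mk_single_true (α : Type*) (p : α) : FreeGroup.mk [(p, true)] = FreeGroup.of p := rfl

lemma mk_single_false (α : Type*) (p : α) : FreeGroup.mk [(p, false)] = (FreeGroup.of p)⁻¹ := by
  rw [← mk_single_true, FreeGroup.inv_mk]; simp [FreeGroup.invRev]

lemma mk_single (α : Type*) (p : α) (e : Bool) :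
    FreeGroup.mk [(p, e)] = if e then FreeGroup.of p else (FreeGroup.of p)⁻¹ := by
  cases e <;> simp [mk_single_true, mk_single_false]

lemma sigma_single_j (j : ℕ+) (s : List ℕ+) (e : Bool) :
    sigmaHat j (FreeGroup.mk [((j, s), e)]) =
      FreeGroup.mk [((j, ([] : List ℕ+)), true)] * FreeGroup.mk [((j + 1, s), e)] *
        FreeGroup.mk [((j, ([] : List ℕ+)), false)] := by
  cases e <;>
    simp [mk_single_true, mk_single_false, sigmaHat, FreeGroup.lift_apply_of, mul_assoc]

lemma sigma_single_j1 (j : ℕ+) (s : List ℕ+) (e : Bool) :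
    sigmaHat j (FreeGroup.mk [((j + 1, s), e)]) = FreeGroup.mk [((j, s), e)] := by
  cases e <;>
    simp [mk_single_true, mk_single_false, sigmaHat, FreeGroup.lift_apply_of,
      (pnat_ne_succ j).symm]

lemma sigma_single_other (j k : ℕ+) (s : List ℕ+) (e : Bool) (h1 : k ≠ j) (h2 : k ≠ j + 1) :
    sigmaHat j (FreeGroup.mk [((k, s), e)]) = FreeGroup.mk [((k, s), e)] := by
  cases e <;> simp [mk_single_true, mk_single_false, sigmaHat, FreeGroup.lift_apply_of, h1, h2]

lemma tau_single_j (j : ℕ+) (s : List ℕ+) (e : Bool) :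
    tauHat j (FreeGroup.mk [((j, s), e)]) = FreeGroup.mk [((j + 1, s), e)] := by
  cases e <;> simp [mk_single_true, mk_single_false, tauHat, FreeGroup.lift_apply_of]

lemma tau_single_j1 (j : ℕ+) (s : List ℕ+) (e : Bool) :
    tauHat j (FreeGroup.mk [((j + 1, s), e)]) =
      FreeGroup.mk [((j + 1, ([] : List ℕ+)), false)] * FreeGroup.mk [((j, s), e)] *
        FreeGroup.mk [((j + 1, ([] : List ℕ+)), true)] := by
  cases e <;>
    simp [mk_single_true, mk_single_false, tauHat, FreeGroup.lift_apply_of,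
      (pnat_ne_succ j).symm, mul_assoc]

lemma tau_single_other (j k : ℕ+) (s : List ℕ+) (e : Bool) (h1 : k ≠ j) (h2 : k ≠ j + 1) :
    tauHat j (FreeGroup.mk [((k, s), e)]) = FreeGroup.mk [((k, s), e)] := by
  cases e <;> simp [mk_single_true, mk_single_false, tauHat, FreeGroup.lift_apply_of, h1, h2]

lemma sigma_tau (j : ℕ+) (u : FG) : sigmaHat j (tauHat j u) = u := by
  have : (sigmaHat j).comp (tauHat j) = MonoidHom.id FG := by
    apply FreeGroup.ext_hom
    rintro ⟨k, s⟩
    by_cases h1 : k = j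
    · subst h1
      simp only [MonoidHom.comp_apply, MonoidHom.id_apply, ← mk_single_true]
      rw [tau_single_j, sigma_single_j1]
    by_cases h2 : k = j + 1
    · subst h2
      simp only [MonoidHom.comp_apply, MonoidHom.id_apply, ← mk_single_true]
      rw [tau_single_j1, map_mul, map_mul, sigma_single_j1, sigma_single_j1,
        sigma_single_j, mk_single_false, mk_single_true]
      group
    · simp only [MonoidHom.comp_apply, MonoidHom.id_apply, ← mk_single_true]
      rw [tau_single_other j k s true h1 h2, sigma_single_other j k s true h1 h2]
  exact DFunLike.congr_fun this u


section Sigma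

lemma no_cancel_head (g : FG) (a : ℕ+ × List ℕ+) (b : Bool)
    (h : ∀ c ∈ g.toWord.getLast?, c.1.1 ≠ a.1) :
    (g * FreeGroup.mk [(a, b)]).toWord = g.toWord ++ [(a, b)] :=
  mul_letter_no_cancel g a b (fun c hc hr => h c hc (congrArg Prod.fst hr.1))

lemma append_pair {β : Type*} (W : List β) (a b : β) : W ++ [a, b] = (W ++ [a]) ++ [b] := by
  simp

lemma pnat_succ_ne (j : ℕ+) : j + 1 ≠ j := (pnat_ne_succ j).symm


variable (j : ℕ+)

/-- the three building blocks of the image of a head-`j` generator -/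
private abbrev Xp (j : ℕ+) : FG := FreeGroup.mk [((j, ([] : List ℕ+)), true)]
private abbrev Xm (j : ℕ+) : FG := FreeGroup.mk [((j, ([] : List ℕ+)), false)]
private abbrev Yl (j : ℕ+) (s : List ℕ+) (e : Bool) : FG := FreeGroup.mk [((j + 1, s), e)]

lemma redpair_shift {a b : ℕ+} {s s' : List ℕ+} {e e' : Bool}
    (h : RedPair ((b, s'), e') ((b, s), e)) : RedPair ((a, s'), e') ((a, s), e) := by
  obtain ⟨h1, h2⟩ := h
  simp only [Prod.mk.injEq] at h1
  exact ⟨by simp [h1.2], h2⟩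

lemma sigA_easy (s : List ℕ+) (e : Bool) (g : FG)
    (h1 : ∀ c ∈ g.toWord.getLast?, ¬ RedPair c ((j, ([] : List ℕ+)), true)) :
    ∃ W', (g * Xp j * Yl j s e * Xm j).toWord
      = W' ++ [((j + 1, s), e), ((j, ([] : List ℕ+)), false)] := by
  have e1 : (g * Xp j).toWord = g.toWord ++ [((j, ([] : List ℕ+)), true)] :=
    mul_letter_no_cancel g _ _ h1
  have e2 : (g * Xp j * Yl j s e).toWord = (g * Xp j).toWord ++ [((j + 1, s), e)] := by
    apply no_cancel_head
    intro c hc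
    rw [e1, List.getLast?_concat, Option.mem_def, Option.some.injEq] at hc
    subst hc
    exact pnat_ne_succ j
  rw [e1] at e2
  have e3 : (g * Xp j * Yl j s e * Xm j).toWord
      = (g * Xp j * Yl j s e).toWord ++ [((j, ([] : List ℕ+)), false)] := by
    apply no_cancel_head
    intro c hc
    rw [e2, List.getLast?_concat, Option.mem_def, Option.some.injEq] at hc
    subst hc
    exact pnat_succ_ne j
  rw [e2] at e3
  exact ⟨g.toWord ++ [((j, ([] : List ℕ+)), true)], by rw [e3]; simp⟩

/-- invariant describing the end of the reduced word of `sigmaHat j (mk w)`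
in terms of the last letter of `w`. -/
def Dsig (j : ℕ+) (o : Option ((ℕ+ × List ℕ+) × Bool))
    (W : List ((ℕ+ × List ℕ+) × Bool)) : Prop :=
  match o with
  | none => W = []
  | some ((k, s), e) =>
    if k = j then ∃ W', W = W' ++ [((j + 1, s), e), ((j, ([] : List ℕ+)), false)]
    else if k = j + 1 then
      W.getLast? = some ((j, s), e) ∨
        (s = [] ∧ e = true ∧ ∃ t d, W.getLast? = some ((j + 1, t), d))
    else W.getLast? = some ((k, s), e)

lemma key_sigma (j : ℕ+) :
    ∀ (n : ℕ) (w : List ((ℕ+ × List ℕ+) × Bool)), w.length ≤ n →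
      w.Chain' (fun a b => ¬ RedPair a b) →
      Dsig j w.getLast? ((sigmaHat j (FreeGroup.mk w)).toWord) := by
  intro n
  induction n with
  | zero =>
    intro w hw _
    have : w = [] := List.eq_nil_of_length_eq_zero (Nat.le_zero.mp hw)
    subst this
    show Dsig j none ((sigmaHat j (FreeGroup.mk [])).toWord)
    have h1 : FreeGroup.mk ([] : List ((ℕ+ × List ℕ+) × Bool)) = 1 := rfl
    rw [h1, map_one, FreeGroup.toWord_one]
    rfl
  | succ n ih =>
    intro w hlen hch
    rcases List.eq_nil_or_concat w with rfl | ⟨w', ℓ, rfl⟩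
    · show Dsig j none ((sigmaHat j (FreeGroup.mk [])).toWord)
      have h1 : FreeGroup.mk ([] : List ((ℕ+ × List ℕ+) × Bool)) = 1 := rfl
      rw [h1, map_one, FreeGroup.toWord_one]
      rfl
    obtain ⟨⟨k, s⟩, e⟩ := ℓ
    rw [List.concat_eq_append] at hch hlen ⊢
    obtain ⟨hch', -, hjun⟩ := List.isChain_append.mp hch
    have hjun' : ∀ c ∈ w'.getLast?, ¬ RedPair c ((k, s), e) := fun c hc =>
      hjun c hc _ (by simp)
    have hlen' : w'.length ≤ n := by
      rw [List.length_append] at hlen; simp at hlen; omega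
    have IH := ih w' hlen' hch'
    rw [List.getLast?_concat, ← FreeGroup.mul_mk, map_mul]
    set g := sigmaHat j (FreeGroup.mk w') with hgdef
    have hmulassoc : ∀ A B C : FG, g * (A * B * C) = g * A * B * C := by
      intro A B C; simp only [mul_assoc]
    by_cases hk : k = j
    · -- ℓ has head j
      subst k
      rw [sigma_single_j, hmulassoc]
      show Dsig j (some ((j, s), e)) _
      simp only [Dsig, if_pos rfl]
      cases hprev : w'.getLast? with
      | none =>
        rw [hprev] at IH
        simp only [Dsig] at IH
        exact sigA_easy j s e g (by rw [IH]; simp)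
      | some c =>
        obtain ⟨⟨k', s'⟩, e'⟩ := c
        rw [hprev] at IH
        simp only [Dsig] at IH
        have hpj : ¬ RedPair ((k', s'), e') ((j, s), e) :=
          hjun' _ (Option.mem_def.mpr hprev)
        by_cases hk' : k' = j
        · -- prev has head j : step 1 cancels the trailing x_j⁻¹
          subst k'
          rw [if_pos rfl] at IH
          obtain ⟨V, hV⟩ := IH
          have e1 : (g * Xp j).toWord = V ++ [((j + 1, s'), e')] :=
            mul_letter_cancel g _ _ _ (by rw [hV]; simp)
          have e2 : (g * Xp j * Yl j s e).toWord
              = (V ++ [((j + 1, s'), e')]) ++ [((j + 1, s), e)] := by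
            rw [← e1]
            apply mul_letter_no_cancel
            intro c hc
            rw [e1, List.getLast?_concat, Option.mem_def, Option.some.injEq] at hc
            subst hc
            exact fun hr => hpj (redpair_shift hr)
          have e3 : (g * Xp j * Yl j s e * Xm j).toWord
              = ((V ++ [((j + 1, s'), e')]) ++ [((j + 1, s), e)])
                ++ [((j, ([] : List ℕ+)), false)] := by
            rw [← e2]
            apply no_cancel_head
            intro c hc
            rw [e2, List.getLast?_concat, Option.mem_def, Option.some.injEq] at hc
            subst hc
            exact pnat_succ_ne j
          exact ⟨V ++ [((j + 1, s'), e')], by rw [e3]; simp⟩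
        rw [if_neg hk'] at IH
        by_cases hk1' : k' = j + 1
        · subst hk1'
          rw [if_pos rfl] at IH
          rcases IH with hlast | ⟨rfl, rfl, t, d, hlast⟩
          · by_cases hx : s' = [] ∧ e' = false
            · -- the tricky case : prev = x_{j+1}⁻¹
              obtain ⟨rfl, rfl⟩ := hx
              have hsplit : w'.dropLast ++ [((j + 1, ([] : List ℕ+)), false)] = w' :=
                List.dropLast_append_getLast? _ (Option.mem_def.mpr hprev)
              have hch2 : w'.dropLast.Chain' (fun a b => ¬ RedPair a b) := by
                rw [← hsplit] at hch'; exact (List.isChain_append.mp hch').1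
              have hjun2 : ∀ c ∈ w'.dropLast.getLast?,
                  ¬ RedPair c ((j + 1, ([] : List ℕ+)), false) := by
                rw [← hsplit] at hch'
                obtain ⟨-, -, hj⟩ := List.isChain_append.mp hch'
                exact fun c hc => hj c hc _ (by simp)
              have hlen2 : w'.dropLast.length ≤ n := by
                rw [List.length_dropLast]; omega
              have IH2 := ih w'.dropLast hlen2 hch2
              have e1 : g * Xp j = sigmaHat j (FreeGroup.mk w'.dropLast) := by
                conv_lhs => rw [hgdef, ← hsplit]
                rw [← FreeGroup.mul_mk, map_mul, sigma_single_j1, mul_assoc]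
                simp [Xp, mk_single_true, mk_single_false]
              set g2 := sigmaHat j (FreeGroup.mk w'.dropLast) with hg2def
              have hcond : ∀ c ∈ g2.toWord.getLast?, c.1.1 ≠ j + 1 := by
                intro c hc
                cases hprev2 : w'.dropLast.getLast? with
                | none =>
                  rw [hprev2] at IH2
                  simp only [Dsig] at IH2
                  rw [IH2] at hc
                  simp at hc
                | some c2 =>
                  obtain ⟨⟨k2, s2⟩, e2'⟩ := c2
                  rw [hprev2] at IH2
                  simp only [Dsig] at IH2
                  by_cases hk2 : k2 = j
                  · subst k2
                    rw [if_pos rfl] at IH2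
                    obtain ⟨V2, hV2⟩ := IH2
                    rw [hV2, append_pair, List.getLast?_concat, Option.mem_def,
                      Option.some.injEq] at hc
                    subst hc
                    exact pnat_ne_succ j
                  rw [if_neg hk2] at IH2
                  by_cases hk21 : k2 = j + 1
                  · subst hk21
                    rw [if_pos rfl] at IH2
                    rcases IH2 with h2 | ⟨rfl, rfl, t2, d2, h2⟩
                    · rw [h2, Option.mem_def, Option.some.injEq] at hc
                      subst hc
                      exact pnat_ne_succ j
                    · exact absurd ⟨rfl, rfl⟩ (hjun2 _ (Option.mem_def.mpr hprev2))
                  · rw [if_neg hk21] at IH2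
                    rw [IH2, Option.mem_def, Option.some.injEq] at hc
                    subst hc
                    exact hk21
              have e2 : (g * Xp j * Yl j s e).toWord = g2.toWord ++ [((j + 1, s), e)] := by
                rw [e1]
                exact no_cancel_head _ _ _ hcond
              have e3 : (g * Xp j * Yl j s e * Xm j).toWord
                  = (g2.toWord ++ [((j + 1, s), e)]) ++ [((j, ([] : List ℕ+)), false)] := by
                rw [← e2]
                apply no_cancel_head
                intro c hc
                rw [e2, List.getLast?_concat, Option.mem_def, Option.some.injEq] at hc
                subst hc
                exact pnat_succ_ne j
              exact ⟨g2.toWord, by rw [e3]; simp⟩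
            · -- no cancellation in step 1
              apply sigA_easy
              intro c hc
              rw [hlast, Option.mem_def, Option.some.injEq] at hc
              subst hc
              rintro ⟨h1, h2⟩
              simp only [Prod.mk.injEq] at h1
              exact hx ⟨h1.2, by cases e' <;> simp_all⟩
          · apply sigA_easy
            intro c hc
            rw [hlast, Option.mem_def, Option.some.injEq] at hc
            subst hc
            exact fun hr => pnat_succ_ne j (congrArg Prod.fst hr.1)
        · rw [if_neg hk1'] at IH
          apply sigA_easy
          intro c hc
          rw [IH, Option.mem_def, Option.some.injEq] at hc
          subst hc
          exact fun hr => hk' (congrArg Prod.fst hr.1)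
    by_cases hk1 : k = j + 1
    · -- ℓ has head j+1
      subst hk1
      rw [sigma_single_j1]
      show Dsig j (some ((j + 1, s), e)) _
      simp only [Dsig, if_neg (pnat_succ_ne j), if_pos rfl]
      cases hprev : w'.getLast? with
      | none =>
        rw [hprev] at IH
        simp only [Dsig] at IH
        left
        rw [mul_letter_no_cancel g _ _ (by rw [IH]; simp), List.getLast?_concat]
      | some c =>
        obtain ⟨⟨k', s'⟩, e'⟩ := c
        rw [hprev] at IH
        simp only [Dsig] at IH
        have hpj : ¬ RedPair ((k', s'), e') ((j + 1, s), e) :=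
          hjun' _ (Option.mem_def.mpr hprev)
        by_cases hk' : k' = j
        · subst k'
          rw [if_pos rfl] at IH
          obtain ⟨V, hV⟩ := IH
          by_cases hse : s = [] ∧ e = true
          · obtain ⟨rfl, rfl⟩ := hse
            have e1 : (g * FreeGroup.mk [((j, ([] : List ℕ+)), true)]).toWord
                = V ++ [((j + 1, s'), e')] :=
              mul_letter_cancel g _ _ _ (by rw [hV]; simp)
            right
            exact ⟨rfl, rfl, s', e', by rw [e1, List.getLast?_concat]⟩
          · left
            have e1 : (g * FreeGroup.mk [((j, s), e)]).toWord
                = g.toWord ++ [((j, s), e)] := by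
              apply mul_letter_no_cancel
              intro c hc
              rw [hV, append_pair, List.getLast?_concat, Option.mem_def,
                Option.some.injEq] at hc
              subst hc
              rintro ⟨h1, h2⟩
              simp only [Prod.mk.injEq] at h1
              exact hse ⟨h1.2.symm, by simpa using h2⟩
            rw [e1, List.getLast?_concat]
        rw [if_neg hk'] at IH
        by_cases hk1' : k' = j + 1
        · subst hk1'
          rw [if_pos rfl] at IH
          rcases IH with hlast | ⟨rfl, rfl, t, d, hlast⟩
          · left
            have e1 : (g * FreeGroup.mk [((j, s), e)]).toWord
                = g.toWord ++ [((j, s), e)] := by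
              apply mul_letter_no_cancel
              intro c hc
              rw [hlast, Option.mem_def, Option.some.injEq] at hc
              subst hc
              exact fun hr => hpj (redpair_shift hr)
            rw [e1, List.getLast?_concat]
          · left
            have e1 : (g * FreeGroup.mk [((j, s), e)]).toWord
                = g.toWord ++ [((j, s), e)] := by
              apply no_cancel_head
              intro c hc
              rw [hlast, Option.mem_def, Option.some.injEq] at hc
              subst hc
              exact pnat_succ_ne j
            rw [e1, List.getLast?_concat]
        · rw [if_neg hk1'] at IH
          left
          have e1 : (g * FreeGroup.mk [((j, s), e)]).toWord
              = g.toWord ++ [((j, s), e)] := by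
            apply no_cancel_head
            intro c hc
            rw [IH, Option.mem_def, Option.some.injEq] at hc
            subst hc
            exact hk'
          rw [e1, List.getLast?_concat]
    · -- ℓ has another head
      rw [sigma_single_other j k s e hk hk1]
      show Dsig j (some ((k, s), e)) _
      simp only [Dsig, if_neg hk, if_neg hk1]
      cases hprev : w'.getLast? with
      | none =>
        rw [hprev] at IH
        simp only [Dsig] at IH
        rw [mul_letter_no_cancel g _ _ (by rw [IH]; simp), List.getLast?_concat]
      | some c =>
        obtain ⟨⟨k', s'⟩, e'⟩ := c
        rw [hprev] at IH
        simp only [Dsig] at IH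
        have hpj : ¬ RedPair ((k', s'), e') ((k, s), e) :=
          hjun' _ (Option.mem_def.mpr hprev)
        have e1 : (g * FreeGroup.mk [((k, s), e)]).toWord
            = g.toWord ++ [((k, s), e)] := by
          apply mul_letter_no_cancel
          intro c hc
          by_cases hk' : k' = j
          · subst k'
            rw [if_pos rfl] at IH
            obtain ⟨V, hV⟩ := IH
            rw [hV, append_pair, List.getLast?_concat, Option.mem_def,
              Option.some.injEq] at hc
            subst hc
            exact fun hr => hk ((congrArg Prod.fst hr.1).symm)
          rw [if_neg hk'] at IH
          by_cases hk1' : k' = j + 1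
          · subst hk1'
            rw [if_pos rfl] at IH
            rcases IH with hlast | ⟨rfl, rfl, t, d, hlast⟩
            · rw [hlast, Option.mem_def, Option.some.injEq] at hc
              subst hc
              exact fun hr => hk ((congrArg Prod.fst hr.1).symm)
            · rw [hlast, Option.mem_def, Option.some.injEq] at hc
              subst hc
              exact fun hr => hk1 ((congrArg Prod.fst hr.1).symm)
          · rw [if_neg hk1'] at IH
            rw [IH, Option.mem_def, Option.some.injEq] at hc
            subst hc
            exact hpj
        rw [e1, List.getLast?_concat]


section TauKey

lemma tauB_easy (j : ℕ+) (s : List ℕ+) (e : Bool) (g : FG)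
    (h1 : ∀ c ∈ g.toWord.getLast?, ¬ RedPair c ((j + 1, ([] : List ℕ+)), false)) :
    ∃ W', (g * Xm (j + 1) * FreeGroup.mk [((j, s), e)] * Xp (j + 1)).toWord
      = W' ++ [((j, s), e), ((j + 1, ([] : List ℕ+)), true)] := by
  have e1 : (g * Xm (j + 1)).toWord = g.toWord ++ [((j + 1, ([] : List ℕ+)), false)] :=
    mul_letter_no_cancel g _ _ h1
  have e2 : (g * Xm (j + 1) * FreeGroup.mk [((j, s), e)]).toWord
      = (g * Xm (j + 1)).toWord ++ [((j, s), e)] := by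
    apply no_cancel_head
    intro c hc
    rw [e1, List.getLast?_concat, Option.mem_def, Option.some.injEq] at hc
    subst hc
    exact pnat_succ_ne j
  rw [e1] at e2
  have e3 : (g * Xm (j + 1) * FreeGroup.mk [((j, s), e)] * Xp (j + 1)).toWord
      = (g * Xm (j + 1) * FreeGroup.mk [((j, s), e)]).toWord
        ++ [((j + 1, ([] : List ℕ+)), true)] := by
    apply no_cancel_head
    intro c hc
    rw [e2, List.getLast?_concat, Option.mem_def, Option.some.injEq] at hc
    subst hc
    exact pnat_ne_succ j
  rw [e2] at e3
  exact ⟨g.toWord ++ [((j + 1, ([] : List ℕ+)), false)], by rw [e3]; simp⟩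

/-- invariant for `tauHat` -/
def Dtau (j : ℕ+) (o : Option ((ℕ+ × List ℕ+) × Bool))
    (W : List ((ℕ+ × List ℕ+) × Bool)) : Prop :=
  match o with
  | none => W = []
  | some ((k, s), e) =>
    if k = j then
      W.getLast? = some ((j + 1, s), e) ∨
        (s = [] ∧ e = false ∧ ∃ t d, W.getLast? = some ((j, t), d))
    else if k = j + 1 then
      ∃ W', W = W' ++ [((j, s), e), ((j + 1, ([] : List ℕ+)), true)]
    else W.getLast? = some ((k, s), e)

lemma key_tau (j : ℕ+) :
    ∀ (n : ℕ) (w : List ((ℕ+ × List ℕ+) × Bool)), w.length ≤ n →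
      w.Chain' (fun a b => ¬ RedPair a b) →
      Dtau j w.getLast? ((tauHat j (FreeGroup.mk w)).toWord) := by
  intro n
  induction n with
  | zero =>
    intro w hw _
    have : w = [] := List.eq_nil_of_length_eq_zero (Nat.le_zero.mp hw)
    subst this
    show Dtau j none ((tauHat j (FreeGroup.mk [])).toWord)
    have h1 : FreeGroup.mk ([] : List ((ℕ+ × List ℕ+) × Bool)) = 1 := rfl
    rw [h1, map_one, FreeGroup.toWord_one]
    rfl
  | succ n ih =>
    intro w hlen hch
    rcases List.eq_nil_or_concat w with rfl | ⟨w', ℓ, rfl⟩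
    · show Dtau j none ((tauHat j (FreeGroup.mk [])).toWord)
      have h1 : FreeGroup.mk ([] : List ((ℕ+ × List ℕ+) × Bool)) = 1 := rfl
      rw [h1, map_one, FreeGroup.toWord_one]
      rfl
    obtain ⟨⟨k, s⟩, e⟩ := ℓ
    rw [List.concat_eq_append] at hch hlen ⊢
    obtain ⟨hch', -, hjun⟩ := List.isChain_append.mp hch
    have hjun' : ∀ c ∈ w'.getLast?, ¬ RedPair c ((k, s), e) := fun c hc =>
      hjun c hc _ (by simp)
    have hlen' : w'.length ≤ n := by
      rw [List.length_append] at hlen; simp at hlen; omega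
    have IH := ih w' hlen' hch'
    rw [List.getLast?_concat, ← FreeGroup.mul_mk, map_mul]
    set g := tauHat j (FreeGroup.mk w') with hgdef
    have hmulassoc : ∀ A B C : FG, g * (A * B * C) = g * A * B * C := by
      intro A B C; simp only [mul_assoc]
    by_cases hk : k = j
    · -- ℓ has head j : single-letter image ((j+1,s),e)
      subst k
      rw [tau_single_j]
      show Dtau j (some ((j, s), e)) _
      simp only [Dtau, if_pos rfl]
      cases hprev : w'.getLast? with
      | none =>
        rw [hprev] at IH
        simp only [Dtau] at IH
        left
        rw [mul_letter_no_cancel g _ _ (by rw [IH]; simp), List.getLast?_concat]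
      | some c =>
        obtain ⟨⟨k', s'⟩, e'⟩ := c
        rw [hprev] at IH
        simp only [Dtau] at IH
        have hpj : ¬ RedPair ((k', s'), e') ((j, s), e) :=
          hjun' _ (Option.mem_def.mpr hprev)
        by_cases hk' : k' = j
        · subst k'
          rw [if_pos rfl] at IH
          rcases IH with hlast | ⟨rfl, rfl, t, d, hlast⟩
          · left
            have e1 : (g * FreeGroup.mk [((j + 1, s), e)]).toWord
                = g.toWord ++ [((j + 1, s), e)] := by
              apply mul_letter_no_cancel
              intro c hc
              rw [hlast, Option.mem_def, Option.some.injEq] at hc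
              subst hc
              exact fun hr => hpj (redpair_shift hr)
            rw [e1, List.getLast?_concat]
          · left
            have e1 : (g * FreeGroup.mk [((j + 1, s), e)]).toWord
                = g.toWord ++ [((j + 1, s), e)] := by
              apply no_cancel_head
              intro c hc
              rw [hlast, Option.mem_def, Option.some.injEq] at hc
              subst hc
              exact pnat_ne_succ j
            rw [e1, List.getLast?_concat]
        rw [if_neg hk'] at IH
        by_cases hk1' : k' = j + 1
        · subst hk1'
          rw [if_pos rfl] at IH
          obtain ⟨V, hV⟩ := IH
          by_cases hse : s = [] ∧ e = false
          · obtain ⟨rfl, rfl⟩ := hse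
            have e1 : (g * FreeGroup.mk [((j + 1, ([] : List ℕ+)), false)]).toWord
                = V ++ [((j, s'), e')] :=
              mul_letter_cancel g _ _ _ (by rw [hV]; simp)
            right
            exact ⟨rfl, rfl, s', e', by rw [e1, List.getLast?_concat]⟩
          · left
            have e1 : (g * FreeGroup.mk [((j + 1, s), e)]).toWord
                = g.toWord ++ [((j + 1, s), e)] := by
              apply mul_letter_no_cancel
              intro c hc
              rw [hV, append_pair, List.getLast?_concat, Option.mem_def,
                Option.some.injEq] at hc
              subst hc
              rintro ⟨h1, h2⟩
              simp only [Prod.mk.injEq] at h1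
              exact hse ⟨h1.2.symm, by simpa using h2⟩
            rw [e1, List.getLast?_concat]
        · rw [if_neg hk1'] at IH
          left
          have e1 : (g * FreeGroup.mk [((j + 1, s), e)]).toWord
              = g.toWord ++ [((j + 1, s), e)] := by
            apply no_cancel_head
            intro c hc
            rw [IH, Option.mem_def, Option.some.injEq] at hc
            subst hc
            exact hk1'
          rw [e1, List.getLast?_concat]
    by_cases hk1 : k = j + 1
    · -- ℓ has head j+1 : three-letter image
      subst hk1
      rw [tau_single_j1, hmulassoc]
      show Dtau j (some ((j + 1, s), e)) _
      simp only [Dtau, if_neg (pnat_succ_ne j), if_pos rfl]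
      cases hprev : w'.getLast? with
      | none =>
        rw [hprev] at IH
        simp only [Dtau] at IH
        exact tauB_easy j s e g (by rw [IH]; simp)
      | some c =>
        obtain ⟨⟨k', s'⟩, e'⟩ := c
        rw [hprev] at IH
        simp only [Dtau] at IH
        have hpj : ¬ RedPair ((k', s'), e') ((j + 1, s), e) :=
          hjun' _ (Option.mem_def.mpr hprev)
        by_cases hk' : k' = j + 1
        · -- prev has head j+1 : step 1 cancels the trailing x_{j+1}
          subst hk'
          rw [if_neg (pnat_succ_ne j), if_pos rfl] at IH
          obtain ⟨V, hV⟩ := IH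
          have e1 : (g * Xm (j + 1)).toWord = V ++ [((j, s'), e')] :=
            mul_letter_cancel g _ _ _ (by rw [hV]; simp)
          have e2 : (g * Xm (j + 1) * FreeGroup.mk [((j, s), e)]).toWord
              = (V ++ [((j, s'), e')]) ++ [((j, s), e)] := by
            rw [← e1]
            apply mul_letter_no_cancel
            intro c hc
            rw [e1, List.getLast?_concat, Option.mem_def, Option.some.injEq] at hc
            subst hc
            exact fun hr => hpj (redpair_shift hr)
          have e3 : (g * Xm (j + 1) * FreeGroup.mk [((j, s), e)] * Xp (j + 1)).toWord
              = ((V ++ [((j, s'), e')]) ++ [((j, s), e)])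
                ++ [((j + 1, ([] : List ℕ+)), true)] := by
            rw [← e2]
            apply no_cancel_head
            intro c hc
            rw [e2, List.getLast?_concat, Option.mem_def, Option.some.injEq] at hc
            subst hc
            exact pnat_ne_succ j
          exact ⟨V ++ [((j, s'), e')], by rw [e3]; simp⟩
        by_cases hkj : k' = j
        · subst k'
          rw [if_pos rfl] at IH
          rcases IH with hlast | ⟨rfl, rfl, t, d, hlast⟩
          · by_cases hx : s' = [] ∧ e' = true
            · -- the tricky case : prev = x_j
              obtain ⟨rfl, rfl⟩ := hx
              have hsplit : w'.dropLast ++ [((j, ([] : List ℕ+)), true)] = w' :=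
                List.dropLast_append_getLast? _ (Option.mem_def.mpr hprev)
              have hch2 : w'.dropLast.Chain' (fun a b => ¬ RedPair a b) := by
                rw [← hsplit] at hch'; exact (List.isChain_append.mp hch').1
              have hjun2 : ∀ c ∈ w'.dropLast.getLast?,
                  ¬ RedPair c ((j, ([] : List ℕ+)), true) := by
                rw [← hsplit] at hch'
                obtain ⟨-, -, hj⟩ := List.isChain_append.mp hch'
                exact fun c hc => hj c hc _ (by simp)
              have hlen2 : w'.dropLast.length ≤ n := by
                rw [List.length_dropLast]; omega
              have IH2 := ih w'.dropLast hlen2 hch2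
              have e1 : g * Xm (j + 1) = tauHat j (FreeGroup.mk w'.dropLast) := by
                conv_lhs => rw [hgdef, ← hsplit]
                rw [← FreeGroup.mul_mk, map_mul, tau_single_j, mul_assoc]
                simp [Xm, mk_single_true, mk_single_false]
              set g2 := tauHat j (FreeGroup.mk w'.dropLast) with hg2def
              have hcond : ∀ c ∈ g2.toWord.getLast?, c.1.1 ≠ j := by
                intro c hc
                cases hprev2 : w'.dropLast.getLast? with
                | none =>
                  rw [hprev2] at IH2
                  simp only [Dtau] at IH2
                  rw [IH2] at hc
                  simp at hc
                | some c2 =>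
                  obtain ⟨⟨k2, s2⟩, e2'⟩ := c2
                  rw [hprev2] at IH2
                  simp only [Dtau] at IH2
                  by_cases hk2 : k2 = j
                  · subst k2
                    rw [if_pos rfl] at IH2
                    rcases IH2 with h2 | ⟨rfl, rfl, t2, d2, h2⟩
                    · rw [h2, Option.mem_def, Option.some.injEq] at hc
                      subst hc
                      exact pnat_succ_ne j
                    · exact absurd ⟨rfl, rfl⟩ (hjun2 _ (Option.mem_def.mpr hprev2))
                  rw [if_neg hk2] at IH2
                  by_cases hk21 : k2 = j + 1
                  · subst hk21
                    rw [if_pos rfl] at IH2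
                    obtain ⟨V2, hV2⟩ := IH2
                    rw [hV2, append_pair, List.getLast?_concat, Option.mem_def,
                      Option.some.injEq] at hc
                    subst hc
                    exact pnat_succ_ne j
                  · rw [if_neg hk21] at IH2
                    rw [IH2, Option.mem_def, Option.some.injEq] at hc
                    subst hc
                    exact hk2
              have e2 : (g * Xm (j + 1) * FreeGroup.mk [((j, s), e)]).toWord
                  = g2.toWord ++ [((j, s), e)] := by
                rw [e1]
                exact no_cancel_head _ _ _ hcond
              have e3 : (g * Xm (j + 1) * FreeGroup.mk [((j, s), e)] * Xp (j + 1)).toWord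
                  = (g2.toWord ++ [((j, s), e)]) ++ [((j + 1, ([] : List ℕ+)), true)] := by
                rw [← e2]
                apply no_cancel_head
                intro c hc
                rw [e2, List.getLast?_concat, Option.mem_def, Option.some.injEq] at hc
                subst hc
                exact pnat_ne_succ j
              exact ⟨g2.toWord, by rw [e3]; simp⟩
            · -- no cancellation in step 1
              apply tauB_easy
              intro c hc
              rw [hlast, Option.mem_def, Option.some.injEq] at hc
              subst hc
              rintro ⟨h1, h2⟩
              simp only [Prod.mk.injEq] at h1
              exact hx ⟨h1.2, by cases e' <;> simp_all⟩
          · apply tauB_easy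
            intro c hc
            rw [hlast, Option.mem_def, Option.some.injEq] at hc
            subst hc
            exact fun hr => pnat_ne_succ j (congrArg Prod.fst hr.1)
        · rw [if_neg hkj, if_neg hk'] at IH
          apply tauB_easy
          intro c hc
          rw [IH, Option.mem_def, Option.some.injEq] at hc
          subst hc
          exact fun hr => hk' (congrArg Prod.fst hr.1)
    · -- ℓ has another head
      rw [tau_single_other j k s e hk hk1]
      show Dtau j (some ((k, s), e)) _
      simp only [Dtau, if_neg hk, if_neg hk1]
      cases hprev : w'.getLast? with
      | none =>
        rw [hprev] at IH
        simp only [Dtau] at IH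
        rw [mul_letter_no_cancel g _ _ (by rw [IH]; simp), List.getLast?_concat]
      | some c =>
        obtain ⟨⟨k', s'⟩, e'⟩ := c
        rw [hprev] at IH
        simp only [Dtau] at IH
        have hpj : ¬ RedPair ((k', s'), e') ((k, s), e) :=
          hjun' _ (Option.mem_def.mpr hprev)
        have e1 : (g * FreeGroup.mk [((k, s), e)]).toWord
            = g.toWord ++ [((k, s), e)] := by
          apply mul_letter_no_cancel
          intro c hc
          by_cases hk' : k' = j
          · subst k'
            rw [if_pos rfl] at IH
            rcases IH with hlast | ⟨rfl, rfl, t, d, hlast⟩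
            · rw [hlast, Option.mem_def, Option.some.injEq] at hc
              subst hc
              exact fun hr => hk1 ((congrArg Prod.fst hr.1).symm)
            · rw [hlast, Option.mem_def, Option.some.injEq] at hc
              subst hc
              exact fun hr => hk ((congrArg Prod.fst hr.1).symm)
          rw [if_neg hk'] at IH
          by_cases hk1' : k' = j + 1
          · subst hk1'
            rw [if_pos rfl] at IH
            obtain ⟨V, hV⟩ := IH
            rw [hV, append_pair, List.getLast?_concat, Option.mem_def,
              Option.some.injEq] at hc
            subst hc
            exact fun hr => hk1 ((congrArg Prod.fst hr.1).symm)
          · rw [if_neg hk1'] at IH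
            rw [IH, Option.mem_def, Option.some.injEq] at hc
            subst hc
            exact hpj
        rw [e1, List.getLast?_concat]

end TauKey

end Sigma

lemma tau_sigma (j : ℕ+) (u : FG) : tauHat j (sigmaHat j u) = u := by
  have : (tauHat j).comp (sigmaHat j) = MonoidHom.id FG := by
    apply FreeGroup.ext_hom
    rintro ⟨k, s⟩
    by_cases h1 : k = j
    · subst h1
      simp only [MonoidHom.comp_apply, MonoidHom.id_apply, ← mk_single_true]
      rw [sigma_single_j, map_mul, map_mul, tau_single_j, tau_single_j1, tau_single_j,
        mk_single_false, mk_single_true]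
      group
    by_cases h2 : k = j + 1
    · subst h2
      simp only [MonoidHom.comp_apply, MonoidHom.id_apply, ← mk_single_true]
      rw [sigma_single_j1, tau_single_j]
    · simp only [MonoidHom.comp_apply, MonoidHom.id_apply, ← mk_single_true]
      rw [sigma_single_other j k s true h1 h2, tau_single_other j k s true h1 h2]
  exact DFunLike.congr_fun this u


/-- For `j > i`, the automorphism `σ̂_j` and its inverse map any reduced word
ending with `x_i⁻¹` to a reduced word ending with `x_i⁻¹`. -/
theorem sigmaHat_gt_preserves_final_inv (i j : ℕ+) (hij : i < j) :
    (∀ u : FG, u.toWord.getLast? = some ((i, ([] : List ℕ+)), false) →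
      ((sigmaHat j) u).toWord.getLast? = some ((i, ([] : List ℕ+)), false)) ∧
    (∀ u : FG, u.toWord.getLast? = some ((i, ([] : List ℕ+)), false) →
      ∀ v : FG, sigmaHat j v = u →
        v.toWord.getLast? = some ((i, ([] : List ℕ+)), false)) := by
  have hij1 : i ≠ j := ne_of_lt hij
  have hij2 : i ≠ j + 1 := by
    intro h
    have h1 : (i : ℕ) < (j : ℕ) := hij
    have h2 : (i : ℕ) = (j : ℕ) + 1 := by
      rw [h]; simp [PNat.add_coe]
    omega
  constructor
  · intro u hu
    have h := key_sigma j u.toWord.length u.toWord le_rfl (chain'_toWord u)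
    rw [FreeGroup.mk_toWord, hu] at h
    simp only [Dsig, if_neg hij1, if_neg hij2] at h
    exact h
  · intro u hu v hv
    have hvt : v = tauHat j u := by rw [← hv, tau_sigma]
    have h := key_tau j u.toWord.length u.toWord le_rfl (chain'_toWord u)
    rw [FreeGroup.mk_toWord, hu] at h
    simp only [Dtau, if_neg hij1, if_neg hij2] at h
    rw [hvt]
    exact h
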